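/- The second moment of Z ~ GABSN(α,β,λ) equals [1 + 15αβ + 3α²/2 + 105β²/2 − bδα(3+2λ²)/(1+λ²) − bδβ(15+20λ²+8λ⁴)/(1+λ²)²] / C(α,β,λ). -/

import Mathlib

open Real MeasureTheory Filter

/-- standard normal pdf -/
noncomputable def phi (z : ℝ) : ℝ := (Real.sqrt (2 * Real.pi))⁻¹ * Real.exp (-z ^ 2 / 2)

/-- standard normal cdf -/
noncomputable def Phi (z : ℝ) : ℝ := ∫ t in Set.Iic z, phi t

noncomputable def bconst : ℝ := Real.sqrt (2 / Real.pi)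

noncomputable def del (l : ℝ) : ℝ := l / Real.sqrt (1 + l ^ 2)

/-- GABSN normalizing constant -/
noncomputable def C (a β l : ℝ) : ℝ :=
  1 + 3 * a * β - a * bconst * del l - β * bconst * del l * (3 + 2 * l ^ 2) / (1 + l ^ 2)
    + a ^ 2 / 2 + 15 * β ^ 2 / 2

/-- GABSN density -/
noncomputable def f (a β l z : ℝ) : ℝ :=
  (((1 - a * z - β * z ^ 3) ^ 2 + 1) * phi z * Phi (l * z)) / C a β l

/-
Expanding the square, `C a β l` times the second moment is a combination of the skew moments
`I k = ∫ z ^ k φ(z) Φ(l z)` for `k = 2, …, 8`. The reflection `z ↦ -z` and `Φ(x) + Φ(-x) = 1`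
give `I (2m) = (2m-1)‼ / 2`. For the odd ones, Stein's identity `E[Z g(Z)] = E[g'(Z)]` with
`g z = z ^ n Φ(l z)` gives `I (n+1) = n I (n-1) + l ∫ z ^ n φ(z) φ(l z)`, and since
`φ(z) φ(l z) = (b/2) φ(√(1+l²) z)` the last integral is a rescaled standard normal moment.
-/

open Set ProbabilityTheory
open scoped Nat

lemma phi_eq_gaussianPDFReal : phi = gaussianPDFReal 0 1 := by
  ext z; simp [phi, gaussianPDFReal]

lemma continuous_phi : Continuous phi := by
  unfold phi; fun_prop

lemma phi_nonneg (z : ℝ) : 0 ≤ phi z := by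
  unfold phi; positivity

lemma phi_le_one (z : ℝ) : phi z ≤ 1 := by
  have h1 : 1 ≤ √(2 * π) := Real.one_le_sqrt.2 (by nlinarith [pi_gt_three])
  unfold phi
  calc (√(2 * π))⁻¹ * exp (-z ^ 2 / 2) ≤ 1 * 1 := by
        gcongr
        · exact inv_le_one_of_one_le₀ h1
        · exact exp_le_one_iff.2 (by nlinarith [sq_nonneg z])
    _ = 1 := one_mul 1

lemma phi_neg (z : ℝ) : phi (-z) = phi z := by
  simp [phi]

lemma hasDerivAt_phi (x : ℝ) : HasDerivAt phi (-x * phi x) x := by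
  have h : HasDerivAt (fun z : ℝ => -z ^ 2 / 2) (-x) x := by
    rw [show (fun z : ℝ => -z ^ 2 / 2) = fun z => -1 / 2 * z ^ 2 by ext; ring]
    exact ((hasDerivAt_pow 2 x).const_mul _).congr_deriv (by push_cast; ring)
  exact (h.exp.const_mul (√(2 * π))⁻¹).congr_deriv (by unfold phi; ring)

lemma integrable_phi : Integrable phi := by
  rw [phi_eq_gaussianPDFReal]; exact integrable_gaussianPDFReal 0 1

lemma integral_phi : ∫ z, phi z = 1 := by
  rw [phi_eq_gaussianPDFReal]; exact integral_gaussianPDFReal_eq_one 0 one_ne_zero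

lemma integrable_pow_mul_phi (k : ℕ) : Integrable fun z : ℝ => z ^ k * phi z := by
  have h := (integrable_rpow_mul_exp_neg_mul_sq (b := 1 / 2) (by norm_num)
    (s := k) (by linarith [k.cast_nonneg (α := ℝ)])).const_mul (√(2 * π))⁻¹
  refine h.congr (.of_forall fun z => ?_)
  simp only [rpow_natCast, phi]; ring_nf

lemma integrable_pow_mul_phi_mul (k : ℕ) {g : ℝ → ℝ} (hg : Continuous g) {c : ℝ}
    (hgc : ∀ x, |g x| ≤ c) : Integrable fun z : ℝ => z ^ k * phi z * g z :=
  (integrable_pow_mul_phi k).mul_bdd hg.aestronglyMeasurable (.of_forall hgc)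

lemma integrable_pow_mul_phi_mul_phi (k : ℕ) (l : ℝ) :
    Integrable fun z : ℝ => z ^ k * phi z * phi (l * z) :=
  integrable_pow_mul_phi_mul k (continuous_phi.comp (continuous_const_mul l))
    fun x => abs_le.2 ⟨by linarith [phi_nonneg (l * x)], phi_le_one (l * x)⟩

lemma Phi_nonneg (z : ℝ) : 0 ≤ Phi z :=
  setIntegral_nonneg measurableSet_Iic fun t _ => phi_nonneg t

lemma Phi_le_one (z : ℝ) : Phi z ≤ 1 :=
  integral_phi ▸ setIntegral_le_integral integrable_phi (.of_forall phi_nonneg)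

lemma abs_Phi_le_one (z : ℝ) : |Phi z| ≤ 1 :=
  abs_le.2 ⟨by linarith [Phi_nonneg z], Phi_le_one z⟩

lemma Phi_add_Phi_neg (x : ℝ) : Phi x + Phi (-x) = 1 := by
  have h : Phi x = ∫ t in Ioi (-x), phi t := by
    rw [Phi, ← integral_comp_neg_Iic x phi]
    simp only [phi_neg]
  rw [h, Phi, add_comm, ← integral_phi]
  exact intervalIntegral.integral_Iic_add_Ioi integrable_phi.integrableOn
    integrable_phi.integrableOn

lemma hasDerivAt_Phi (x : ℝ) : HasDerivAt Phi (phi x) x := by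
  have h : Phi = fun z => (∫ t in (0 : ℝ)..z, phi t) + Phi 0 := by
    ext z
    rw [← intervalIntegral.integral_Iic_sub_Iic integrable_phi.integrableOn
      integrable_phi.integrableOn, Phi, Phi, sub_add_cancel]
  rw [h]
  exact (intervalIntegral.integral_hasDerivAt_right integrable_phi.intervalIntegrable
    (continuous_phi.stronglyMeasurableAtFilter _ _) continuous_phi.continuousAt).add_const _

lemma continuous_Phi : Continuous Phi :=
  continuous_iff_continuousAt.2 fun x => (hasDerivAt_Phi x).continuousAt

theorem integral_mul_mul_phi_eq_integral_deriv_mul_phi {g g' : ℝ → ℝ}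
    (hg : ∀ x, HasDerivAt g (g' x) x) (hgφ : Integrable fun x => g x * phi x)
    (hxgφ : Integrable fun x => g x * (x * phi x)) (hg'φ : Integrable fun x => g' x * phi x) :
    ∫ x, g x * (x * phi x) = ∫ x, g' x * phi x := by
  have h := integral_mul_deriv_eq_deriv_mul_of_integrable (v := fun x => -phi x)
    (fun x _ => hg x) (fun x _ => (hasDerivAt_phi x).neg.congr_deriv (by ring))
    hxgφ (by simpa [Pi.mul_def] using hg'φ.neg) (by simpa [Pi.mul_def] using hgφ.neg)
  simpa [integral_neg] using h

-- For `n = 0` the right side vanishes whatever the truncated `n - 1` is; likewise below.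
lemma integral_pow_succ_mul_phi (n : ℕ) :
    ∫ z, z ^ (n + 1) * phi z = n * ∫ z, z ^ (n - 1) * phi z := by
  have h := integral_mul_mul_phi_eq_integral_deriv_mul_phi (fun x => hasDerivAt_pow n x)
    (integrable_pow_mul_phi n) ((integrable_pow_mul_phi (n + 1)).congr (.of_forall fun x => by ring))
    ((integrable_pow_mul_phi (n - 1)).const_mul n |>.congr (.of_forall fun x => by ring))
  calc ∫ z, z ^ (n + 1) * phi z = ∫ z, z ^ n * (z * phi z) := by congr with z; ring
    _ = ∫ z, n * z ^ (n - 1) * phi z := h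
    _ = n * ∫ z, z ^ (n - 1) * phi z := by rw [← integral_const_mul]; congr with z; ring

lemma integral_pow_two_mul_mul_phi (m : ℕ) :
    ∫ z, z ^ (2 * m) * phi z = ((2 * m - 1)‼ : ℕ) := by
  induction m with
  | zero => simpa using integral_phi
  | succ m ih =>
    rw [show 2 * (m + 1) = (2 * m + 1) + 1 by ring, integral_pow_succ_mul_phi,
      Nat.add_sub_cancel, ih, Nat.add_sub_cancel,
      Nat.doubleFactorial_add_one]
    push_cast; ring

lemma integrable_pow_mul_phi_mul_Phi (k : ℕ) (l : ℝ) :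
    Integrable fun z : ℝ => z ^ k * phi z * Phi (l * z) :=
  integrable_pow_mul_phi_mul k (continuous_Phi.comp (continuous_const_mul l))
    fun x => abs_Phi_le_one (l * x)

lemma integral_pow_succ_mul_phi_mul_Phi (n : ℕ) (l : ℝ) :
    ∫ z, z ^ (n + 1) * phi z * Phi (l * z)
      = n * (∫ z, z ^ (n - 1) * phi z * Phi (l * z)) + l * ∫ z, z ^ n * phi z * phi (l * z) := by
  have hg (x : ℝ) : HasDerivAt (fun x => x ^ n * Phi (l * x))
      (n * x ^ (n - 1) * Phi (l * x) + x ^ n * (l * phi (l * x))) x :=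
    ((hasDerivAt_pow n x).mul ((hasDerivAt_Phi (l * x)).comp x
      ((hasDerivAt_id x).const_mul l))).congr_deriv (by simp [mul_comm])
  have h := integral_mul_mul_phi_eq_integral_deriv_mul_phi hg
    ((integrable_pow_mul_phi_mul_Phi n l).congr (.of_forall fun x => by ring))
    ((integrable_pow_mul_phi_mul_Phi (n + 1) l).congr (.of_forall fun x => by ring))
    ((((integrable_pow_mul_phi_mul_Phi (n - 1) l).const_mul n).add
      ((integrable_pow_mul_phi_mul_phi n l).const_mul l)).congr
      (.of_forall fun x => by simp only [Pi.add_apply]; ring))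
  calc ∫ z, z ^ (n + 1) * phi z * Phi (l * z)
      = ∫ x, x ^ n * Phi (l * x) * (x * phi x) := by congr with x; ring
    _ = ∫ x, (n * x ^ (n - 1) * Phi (l * x) + x ^ n * (l * phi (l * x))) * phi x := h
    _ = ∫ x, (n * (x ^ (n - 1) * phi x * Phi (l * x)) + l * (x ^ n * phi x * phi (l * x))) := by
        congr with x; ring
    _ = _ := by
        rw [integral_add ((integrable_pow_mul_phi_mul_Phi (n - 1) l).const_mul _)
          ((integrable_pow_mul_phi_mul_phi n l).const_mul _), integral_const_mul,
          integral_const_mul]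

lemma bconst_div_two : bconst / 2 = (√(2 * π))⁻¹ := by
  rw [bconst, sqrt_div zero_le_two, sqrt_mul zero_le_two]
  field_simp
  rw [sq_sqrt zero_le_two]

lemma phi_mul_phi (l z : ℝ) : phi z * phi (l * z) = bconst / 2 * phi (√(1 + l ^ 2) * z) := by
  calc phi z * phi (l * z)
      = (√(2 * π))⁻¹ * ((√(2 * π))⁻¹ * (exp (-z ^ 2 / 2) * exp (-(l * z) ^ 2 / 2))) := by
        unfold phi; ring
    _ = bconst / 2 * phi (√(1 + l ^ 2) * z) := by
        rw [bconst_div_two, ← exp_add, phi, mul_pow, mul_pow, sq_sqrt (by positivity)]; ring_nf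

lemma integral_pow_mul_phi_const_mul (k : ℕ) {s : ℝ} (hs : 0 < s) :
    ∫ z, z ^ k * phi (s * z) = (∫ z, z ^ k * phi z) / s ^ (k + 1) := by
  calc ∫ z, z ^ k * phi (s * z) = ∫ z, (s ^ k)⁻¹ * ((s * z) ^ k * phi (s * z)) := by
        congr with z; field_simp; ring
    _ = (s ^ k)⁻¹ * (|s⁻¹| * ∫ z, z ^ k * phi z) := by
        rw [integral_const_mul, Measure.integral_comp_mul_left (fun u => u ^ k * phi u)]; rfl
    _ = (∫ z, z ^ k * phi z) / s ^ (k + 1) := by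
        rw [abs_of_pos (inv_pos.2 hs)]; field_simp; ring

lemma integral_pow_mul_phi_mul_phi (k : ℕ) (l : ℝ) :
    ∫ z, z ^ k * phi z * phi (l * z)
      = bconst / 2 * (∫ z, z ^ k * phi z) / √(1 + l ^ 2) ^ (k + 1) := by
  simp_rw [mul_assoc, phi_mul_phi, mul_left_comm _ (bconst / 2), integral_const_mul,
    integral_pow_mul_phi_const_mul k (sqrt_pos.2 (by positivity : 0 < 1 + l ^ 2))]
  ring

lemma integral_pow_mul_phi_mul_Phi_of_even {k : ℕ} (hk : Even k) (l : ℝ) :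
    ∫ z, z ^ k * phi z * Phi (l * z) = (∫ z, z ^ k * phi z) / 2 := by
  have hreflect : ∫ z, z ^ k * phi z * Phi (l * z) = ∫ z, z ^ k * phi z * Phi (-(l * z)) := by
    rw [← integral_neg_eq_self]
    simp only [hk.neg_pow, phi_neg, mul_neg]
  have hcompl : ∫ z, z ^ k * phi z * Phi (-(l * z))
      = (∫ z, z ^ k * phi z) - ∫ z, z ^ k * phi z * Phi (l * z) := by
    rw [← integral_sub (integrable_pow_mul_phi k) (integrable_pow_mul_phi_mul_Phi k l)]
    congr with z
    linear_combination (z ^ k * phi z) * Phi_add_Phi_neg (l * z)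
  linarith

lemma integral_pow_two_mul_mul_phi_mul_Phi (m : ℕ) (l : ℝ) :
    ∫ z, z ^ (2 * m) * phi z * Phi (l * z) = ((2 * m - 1)‼ : ℕ) / 2 := by
  rw [integral_pow_mul_phi_mul_Phi_of_even (even_two_mul m), integral_pow_two_mul_mul_phi]

lemma mul_integral_pow_two_mul_mul_phi_mul_phi (m : ℕ) (l : ℝ) :
    l * ∫ z, z ^ (2 * m) * phi z * phi (l * z)
      = bconst * del l / 2 * ((2 * m - 1)‼ : ℕ) / (1 + l ^ 2) ^ m := by
  have hs : 0 < √(1 + l ^ 2) := sqrt_pos.2 (by positivity)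
  rw [integral_pow_mul_phi_mul_phi, integral_pow_two_mul_mul_phi, del, pow_succ, pow_mul,
    sq_sqrt (by positivity)]
  field_simp

lemma integral_pow_three_mul_phi_mul_Phi (l : ℝ) :
    ∫ z, z ^ 3 * phi z * Phi (l * z) = bconst * del l / 2 * ((3 + 2 * l ^ 2) / (1 + l ^ 2)) := by
  rw [integral_pow_succ_mul_phi_mul_Phi 2, integral_pow_succ_mul_phi_mul_Phi 0,
    mul_integral_pow_two_mul_mul_phi_mul_phi 0, mul_integral_pow_two_mul_mul_phi_mul_phi 1]
  norm_num
  field_simp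
  ring

lemma integral_pow_five_mul_phi_mul_Phi (l : ℝ) :
    ∫ z, z ^ 5 * phi z * Phi (l * z)
      = bconst * del l / 2 * ((15 + 20 * l ^ 2 + 8 * l ^ 4) / (1 + l ^ 2) ^ 2) := by
  rw [integral_pow_succ_mul_phi_mul_Phi 4, integral_pow_three_mul_phi_mul_Phi,
    mul_integral_pow_two_mul_mul_phi_mul_phi 2]
  norm_num [Nat.doubleFactorial]
  field_simp
  ring

lemma integral_sum_pow_mul_phi_mul_Phi {n : ℕ} (c : Fin n → ℝ) (l : ℝ) :
    ∫ z, (∑ i, c i * z ^ (i : ℕ)) * phi z * Phi (l * z)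
      = ∑ i, c i * ∫ z, z ^ (i : ℕ) * phi z * Phi (l * z) := by
  simp_rw [Finset.sum_mul]
  rw [integral_finsetSum _ fun i _ => ?_]
  · simp_rw [← integral_const_mul, mul_assoc]
  · simpa only [mul_assoc] using (integrable_pow_mul_phi_mul_Phi i l).const_mul (c i)

theorem stmt_14 (a β l : ℝ) :
    ∫ z : ℝ, z ^ 2 * f a β l z
      = (1 + 15 * a * β + 3 * a ^ 2 / 2 + 105 * β ^ 2 / 2
          - bconst * del l * a * (3 + 2 * l ^ 2) / (1 + l ^ 2)
          - bconst * del l * β * (15 + 20 * l ^ 2 + 8 * l ^ 4) / (1 + l ^ 2) ^ 2)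
        / C a β l := by
  set c : Fin 9 → ℝ := ![0, 0, 2, -2 * a, a ^ 2, -2 * β, 2 * a * β, 0, β ^ 2]
  have hc (z : ℝ) : z ^ 2 * ((1 - a * z - β * z ^ 3) ^ 2 + 1) = ∑ i, c i * z ^ (i : ℕ) := by
    simp only [c, Fin.sum_univ_succ, Fin.sum_univ_zero, Matrix.cons_val_zero,
      Matrix.cons_val_succ, Fin.val_zero, Fin.val_succ]
    ring
  calc ∫ z, z ^ 2 * f a β l z
      = (∫ z, (∑ i, c i * z ^ (i : ℕ)) * phi z * Phi (l * z)) / C a β l := by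
        rw [← integral_div]; congr with z; rw [f, ← hc]; ring
    _ = _ := by
      rw [integral_sum_pow_mul_phi_mul_Phi]
      simp only [c, Fin.sum_univ_succ, Fin.sum_univ_zero, Matrix.cons_val_zero,
        Matrix.cons_val_succ, Fin.val_zero, Fin.val_succ, Nat.reduceAdd, zero_mul, zero_add,
        add_zero]
      rw [integral_pow_two_mul_mul_phi_mul_Phi 1, integral_pow_two_mul_mul_phi_mul_Phi 2,
        integral_pow_two_mul_mul_phi_mul_Phi 3, integral_pow_two_mul_mul_phi_mul_Phi 4,
        integral_pow_three_mul_phi_mul_Phi, integral_pow_five_mul_phi_mul_Phi]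
      simp only [Nat.reduceMul, Nat.reduceSub, Nat.doubleFactorial]
      congr 1
      field_simp
      ring
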